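/- Let A = M₄(ℂ[X,Y]) and let Γ = ℤ/2ℤ act on A by ε(P)(X,Y) = D·P(−X,−Y)·D⁻¹ where D = diag(1,1,−1,−1). Then in the crossed product A⋊Γ with e_Γ = ½(1 + [ε]), the two-sided ideal generated by e_Γ is all of A⋊Γ: (A⋊Γ)e_Γ(A⋊Γ) = A⋊Γ. -/

import Mathlib

/-! For `a, b ∈ A` and `s ∈ Γ` the product `[a]·e_Γ·b[s]` is `γ ↦ ½·a·(γ - s)(b)`. With `b = 1`
this is `½c` in both components; writing `1 = ∑ₖ E_{k,σk} E_{σk,k}` with every `E_{σk,k}`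
anti-invariant under `ε` (the entries of `D` at `k` and `σk` have opposite signs) gives `±½c`
instead. Adding the two, every `c[s]` lies in the ideal, hence so does every element. -/

open MvPolynomial

/-- `A := M₄(ℂ[X,Y])`. -/
noncomputable abbrev M4 : Type := Matrix (Fin 4) (Fin 4) (MvPolynomial (Fin 2) ℂ)

/-- `D = diag(1,1,−1,−1)`. -/
noncomputable def D4 : M4 := Matrix.diagonal ![1, 1, -1, -1]

/-- The automorphism `ε` of `A = M₄(ℂ[X,Y])`: `ε(P)(X,Y) = D·P(−X,−Y)·D⁻¹`. -/
noncomputable def eps (P : M4) : M4 :=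
  D4 * P.map (MvPolynomial.aeval (fun i => -(MvPolynomial.X i))) * D4⁻¹

/-- The action of `Γ = ℤ/2ℤ` on `A` with the nontrivial element acting by `ε`. -/
noncomputable def act (g : ZMod 2) (P : M4) : M4 := if g = 0 then P else eps P

/-- Multiplication in the crossed product `A ⋊ Γ`, elements being written as
functions `Γ → A`. -/
noncomputable def crossedMul (f g : ZMod 2 → M4) : ZMod 2 → M4 :=
  fun γ => ∑ α : ZMod 2, f α * act α (g (γ - α))

/-- The idempotent `e_Γ = ½(1 + [ε])` of `A ⋊ Γ`. -/
noncomputable def eGamma : ZMod 2 → M4 := fun _ => (2 : ℂ)⁻¹ • (1 : M4)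

section SandwichSpan

variable {R : Type*} [AddCommMonoid R]

def sandwichSpan (mul : R → R → R) (e : R) : AddSubmonoid R where
  carrier := {f | ∃ (n : ℕ) (x y : Fin n → R), f = ∑ i, mul (mul (x i) e) (y i)}
  zero_mem' := ⟨0, Fin.elim0, Fin.elim0, by simp⟩
  add_mem' := by
    rintro _ _ ⟨m, x, y, rfl⟩ ⟨n, x', y', rfl⟩
    exact ⟨m + n, Fin.append x x', Fin.append y y', by simp [Fin.sum_univ_add]⟩

theorem sandwich_mem_sandwichSpan (mul : R → R → R) (e x y : R) :
    mul (mul x e) y ∈ sandwichSpan mul e :=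
  ⟨1, fun _ => x, fun _ => y, by simp⟩

end SandwichSpan

theorem D4_mul_self : D4 * D4 = 1 := by
  rw [D4, Matrix.diagonal_mul_diagonal, ← Matrix.diagonal_one]
  congr 1
  ext i
  fin_cases i <;> simp

theorem inv_D4 : D4⁻¹ = D4 := Matrix.inv_eq_right_inv D4_mul_self

theorem eps_one : eps 1 = 1 := by
  rw [eps, Matrix.map_one _ (map_zero _) (map_one _), mul_one, inv_D4, D4_mul_self]

theorem eps_single_one (i j : Fin 4) :
    eps (Matrix.single i j 1) =
      (![1, 1, -1, -1] i * ![1, 1, -1, -1] j : MvPolynomial (Fin 2) ℂ) • Matrix.single i j 1 := by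
  ext a b : 1
  rw [eps, Matrix.map_single, map_one, inv_D4, D4, Matrix.mul_diagonal, Matrix.diagonal_mul]
  by_cases h : a = i ∧ b = j
  · obtain ⟨rfl, rfl⟩ := h
    simp
  · simp [Matrix.single_apply_of_ne _ _ _ _ _ fun h' => h ⟨h'.1.symm, h'.2.symm⟩]

theorem act_zero (g : ZMod 2) : act g 0 = 0 := by
  simp [act, eps]

theorem act_one (g : ZMod 2) : act g 1 = 1 := by
  simp [act, eps_one]

theorem act_of_eps_eq_neg {b : M4} (hb : eps b = -b) (g : ZMod 2) :
    act g b = if g = 0 then b else -b := by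
  rw [act, hb]

theorem crossedMul_const_single (c b : M4) (s γ : ZMod 2) :
    crossedMul (fun _ => c) (Pi.single s b) γ = c * act (γ - s) b := by
  rw [crossedMul, Fintype.sum_eq_single (γ - s), sub_sub_cancel, Pi.single_eq_same]
  intro α hα
  rw [Pi.single_eq_of_ne (fun h => hα (by rw [← h, sub_sub_cancel])), act_zero, mul_zero]

theorem crossedMul_single_zero_eGamma (a : M4) :
    crossedMul (Pi.single 0 a) eGamma = fun _ => (2 : ℂ)⁻¹ • a := by
  funext γ
  rw [crossedMul, Fintype.sum_eq_single 0, Pi.single_eq_same, act, if_pos rfl, eGamma,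
    mul_smul_comm, mul_one]
  intro α hα
  rw [Pi.single_eq_of_ne hα, zero_mul]

theorem crossedMul_single_eGamma_single (a b : M4) (s : ZMod 2) :
    crossedMul (crossedMul (Pi.single 0 a) eGamma) (Pi.single s b) =
      fun γ => (2 : ℂ)⁻¹ • (a * act (γ - s) b) := by
  funext γ
  rw [crossedMul_single_zero_eGamma, crossedMul_const_single, smul_mul_assoc]


theorem single_eq_add_sum_sandwich {ι : Type*} [Fintype ι] (u v : ι → M4)
    (huv : ∑ k, u k * v k = 1) (hv : ∀ k, eps (v k) = -v k) (c : M4) (s : ZMod 2) :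
    Pi.single s c = crossedMul (crossedMul (Pi.single 0 c) eGamma) (Pi.single s 1) +
      ∑ k, crossedMul (crossedMul (Pi.single 0 (c * u k)) eGamma) (Pi.single s (v k)) := by
  have hcuv : ∑ k, c * u k * v k = c := by
    simp only [mul_assoc, ← Finset.mul_sum, huv, mul_one]
  funext γ
  simp only [Pi.add_apply, Finset.sum_apply, crossedMul_single_eGamma_single, act_one, mul_one,
    act_of_eps_eq_neg (hv _), sub_eq_zero, ← Finset.smul_sum]
  by_cases h : γ = s
  · simp only [h, Pi.single_eq_same, if_true, hcuv]
    module
  · simp only [h, Pi.single_eq_of_ne h, if_false, mul_neg, Finset.sum_neg_distrib, hcuv]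
    module

theorem exists_anti_invariant_factorization_one :
    ∃ u v : Fin 4 → M4, ∑ k, u k * v k = 1 ∧ ∀ k, eps (v k) = -v k := by
  let σ : Fin 4 → Fin 4 := ![2, 2, 0, 0]
  refine ⟨fun k => Matrix.single k (σ k) 1, fun k => Matrix.single (σ k) k 1, ?_, fun k => ?_⟩
  · simp only [Matrix.single_mul_single_same, mul_one, Matrix.sum_single_one]
  · rw [eps_single_one]
    fin_cases k <;> simp [σ]

theorem single_mem_sandwichSpan_eGamma (s : ZMod 2) (c : M4) :
    Pi.single s c ∈ sandwichSpan crossedMul eGamma := by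
  obtain ⟨u, v, huv, hv⟩ := exists_anti_invariant_factorization_one
  rw [single_eq_add_sum_sandwich u v huv hv c s]
  exact add_mem (sandwich_mem_sandwichSpan ..) (sum_mem fun k _ => sandwich_mem_sandwichSpan ..)

/-- In the crossed product `A ⋊ Γ`, `A = M₄(ℂ[X,Y])`,
`Γ = ℤ/2ℤ` acting by `ε(P)(X,Y) = D·P(−X,−Y)·D⁻¹` with `D = diag(1,1,−1,−1)`, the
two-sided ideal generated by `e_Γ = ½(1+[ε])` is all of `A ⋊ Γ`:
`(A⋊Γ)e_Γ(A⋊Γ) = A⋊Γ`, i.e. every element of `A ⋊ Γ` is a finite sum of elements of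
the form `x·e_Γ·y`. -/
theorem ideal_of_eGamma_is_everything :
    ∀ f : ZMod 2 → M4, ∃ (n : ℕ) (x y : Fin n → (ZMod 2 → M4)),
      f = ∑ i, crossedMul (crossedMul (x i) eGamma) (y i) := by
  intro f
  have hf : f ∈ sandwichSpan crossedMul eGamma := by
    rw [← Finset.univ_sum_single f]
    exact sum_mem fun s _ => single_mem_sandwichSpan_eGamma s (f s)
  exact hf
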